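/- arXiv:2308.14157 — 8 statements merged into one kernel-verified Lean document; each statement's English description precedes it below -/
import Mathlib

section
/- The only non-singular matrix in M_n(ℤ) that is an s-th power in M_n(ℤ) for every positive integer s is the identity matrix. -/
/-!
The powers of an element of a finite monoid of order `N` become periodic after at most `N` steps,
with period at most `N`, so `x ^ N!` is idempotent. Taking `s = N!` for `N = #M_n(ℤ/m)` shows that
`A` is idempotent modulo every `m`, hence `A² = A` over `ℤ`. Then `det A` is a nonzero idempotent,
so `det A = 1`, and an invertible idempotent is the identity.
-/

open Nat

theorem pow_add_mul_eq_pow_of_pow_add_eq {M : Type*} [Monoid M] {x : M} {i p : ℕ}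
    (h : x ^ (i + p) = x ^ i) {a : ℕ} (ha : i ≤ a) (k : ℕ) : x ^ (a + k * p) = x ^ a := by
  have step : ∀ b, i ≤ b → x ^ (b + p) = x ^ b := fun b hb => by
    obtain ⟨c, rfl⟩ := Nat.exists_eq_add_of_le hb
    rw [add_right_comm, pow_add, h, ← pow_add]
  induction k with
  | zero => simp
  | succ k ih => rw [succ_mul, ← add_assoc, step _ (ha.trans (Nat.le_add_right _ _)), ih]

theorem isIdempotentElem_pow_factorial_card {M : Type*} [Monoid M] [Fintype M] (x : M) :
    IsIdempotentElem (x ^ (Fintype.card M)!) := by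
  set N := Fintype.card M
  have hperiodic : ∃ i p, 0 < p ∧ i + p ≤ N ∧ x ^ (i + p) = x ^ i := by
    obtain ⟨i, j, hij, hx⟩ :=
      Fintype.exists_ne_map_eq_of_card_lt (fun k : Fin (N + 1) => x ^ (k : ℕ)) (by simp [N])
    rcases lt_or_gt_of_ne (Fin.val_ne_of_ne hij) with hlt | hlt
    · exact ⟨i, j - i, by omega, by omega, by rw [Nat.add_sub_cancel' hlt.le]; exact hx.symm⟩
    · exact ⟨j, i - j, by omega, by omega, by rw [Nat.add_sub_cancel' hlt.le]; exact hx⟩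
  obtain ⟨i, p, hp, hiN, hx⟩ := hperiodic
  obtain ⟨k, hk⟩ := Nat.dvd_factorial hp (by omega : p ≤ N)
  have hi : i ≤ N ! := (by omega : i ≤ N).trans N.self_le_factorial
  rw [IsIdempotentElem, ← pow_add]
  nth_rw 2 [hk]
  rw [mul_comm p k]
  exact pow_add_mul_eq_pow_of_pow_add_eq hx hi k

theorem Int.eq_of_forall_intCast_zmod_eq {a b : ℤ} (h : ∀ m : ℕ, 0 < m → (a : ZMod m) = b) :
    a = b := by
  have hdvd := (ZMod.intCast_eq_intCast_iff_dvd_sub a b _).mp (h ((b - a).natAbs + 1) (by omega))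
  have := Int.eq_zero_of_abs_lt_dvd hdvd (by push_cast; rw [Int.abs_eq_natAbs]; omega)
  omega

theorem Matrix.eq_of_forall_map_intCast_eq {ι κ : Type*} {M N : Matrix ι κ ℤ}
    (h : ∀ m : ℕ, 0 < m → M.map (Int.cast : ℤ → ZMod m) = N.map Int.cast) : M = N :=
  Matrix.ext fun i j => Int.eq_of_forall_intCast_zmod_eq fun m hm => congrFun₂ (h m hm) i j

theorem Matrix.eq_one_of_isIdempotentElem {ι R : Type*} [Fintype ι] [DecidableEq ι] [CommRing R]
    [NoZeroDivisors R] {A : Matrix ι ι R} (hA : IsIdempotentElem A) (hdet : A.det ≠ 0) : A = 1 := by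
  have hdet1 : A.det = 1 :=
    (IsIdempotentElem.iff_eq_zero_or_one.mp (hA.map Matrix.detMonoidHom)).resolve_left hdet
  exact (IsIdempotentElem.iff_eq_one_of_isUnit
    ((Matrix.isUnit_iff_isUnit_det A).mpr (hdet1 ▸ isUnit_one))).mp hA

theorem stmt_0 (n : ℕ) (A : Matrix (Fin n) (Fin n) ℤ) (hA : A.det ≠ 0)
    (h : ∀ s : ℕ, 0 < s → ∃ B : Matrix (Fin n) (Fin n) ℤ, B ^ s = A) :
    A = 1 := by
  refine Matrix.eq_one_of_isIdempotentElem ?_ hA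
  refine Matrix.eq_of_forall_map_intCast_eq fun m hm => ?_
  have : NeZero m := ⟨hm.ne'⟩
  let reduce := (Int.castRingHom (ZMod m)).mapMatrix (m := Fin n)
  obtain ⟨B, rfl⟩ := h _ (factorial_pos (Fintype.card (Matrix (Fin n) (Fin n) (ZMod m))))
  have := isIdempotentElem_pow_factorial_card (reduce B)
  rw [← map_pow] at this
  exact (map_mul reduce _ _).trans this
end

section
/- If a matrix A ∈ M_n(ℤ) with nonzero determinant is an s-th power in M_n(ℤ) for all but finitely many positive integers s, then A is the identity matrix. -/
/-!
Write `A = B ^ s` with `s` a large multiple of the order of `GL_n(𝔽_p)`. Since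
`det A = (det B) ^ s` is nonzero with `|det A| < 2 ^ s`, `det B = ±1`, so `B` reduces mod `p`
to an element of `GL_n(𝔽_p)` and `A ≡ B ^ s ≡ 1 (mod p)`. This holds for every prime `p`,
hence `A = 1`.
-/

theorem Int.isUnit_of_pow_eq_of_natAbs_lt_two_pow {d e : ℤ} {s : ℕ} (hd : d ≠ 0)
    (he : e ^ s = d) (hs : d.natAbs < 2 ^ s) : IsUnit d := by
  have hs0 : s ≠ 0 := by
    rintro rfl
    exact hd (Int.natAbs_eq_zero.mp (by simpa using hs))
  have he0 : e.natAbs ≠ 0 := by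
    rintro h0
    rw [Int.natAbs_eq_zero.mp h0, zero_pow hs0] at he
    exact hd he.symm
  have he2 : e.natAbs < 2 := by
    rw [← he, Int.natAbs_pow] at hs
    exact (Nat.pow_lt_pow_iff_left hs0).mp hs
  rw [← he]
  exact (Int.isUnit_iff_natAbs_eq.mpr (by omega)).pow s

theorem IsUnit.pow_eq_one_of_card_units_dvd {M : Type*} [Monoid M] {x : M} (hx : IsUnit x)
    {s : ℕ} (hs : Nat.card Mˣ ∣ s) : x ^ s = 1 := by
  obtain ⟨u, rfl⟩ := hx
  obtain ⟨k, rfl⟩ := hs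
  rw [← Units.val_pow_eq_pow_val, pow_mul, pow_card_eq_one', one_pow, Units.val_one]

theorem Int.eq_of_forall_prime_intCast_eq {a b : ℤ} (h : ∀ p : ℕ, p.Prime → (a : ZMod p) = b) :
    a = b := by
  obtain ⟨p, hp_gt, hp⟩ := Nat.exists_infinite_primes ((a - b).natAbs + 1)
  have hdvd : (p : ℤ) ∣ a - b := by
    rw [← ZMod.intCast_zmod_eq_zero_iff_dvd, Int.cast_sub, h p hp, sub_self]
  have := Int.eq_zero_of_dvd_of_natAbs_lt_natAbs hdvd (by simpa using hp_gt)
  omega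

theorem Matrix.eq_of_forall_prime_map_intCast_eq {m n : Type*} {A B : Matrix m n ℤ}
    (h : ∀ p : ℕ, p.Prime → A.map (Int.cast : ℤ → ZMod p) = B.map Int.cast) : A = B := by
  ext i j
  exact Int.eq_of_forall_prime_intCast_eq fun p hp => congrFun₂ (h p hp) i j

theorem stmt_1 (n : ℕ) (A : Matrix (Fin n) (Fin n) ℤ) (hA : A.det ≠ 0)
    (h : {s : ℕ | 0 < s ∧ ¬∃ B : Matrix (Fin n) (Fin n) ℤ, B ^ s = A}.Finite) :
    A = 1 := by
  obtain ⟨M, hM⟩ := h.bddAbove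
  have hroot : ∀ s, M < s → ∃ B : Matrix (Fin n) (Fin n) ℤ, B ^ s = A := fun s hs => by
    by_contra hB
    exact (hM ⟨by omega, hB⟩).not_gt hs
  refine Matrix.eq_of_forall_prime_map_intCast_eq fun p hp => ?_
  have : Fact p.Prime := ⟨hp⟩
  obtain ⟨s, hNs, hs⟩ : ∃ s, Nat.card (Matrix (Fin n) (Fin n) (ZMod p))ˣ ∣ s ∧
      M + A.det.natAbs < s :=
    ⟨_, dvd_mul_right _ (M + A.det.natAbs + 1),
      (Nat.lt_succ_self _).trans_le (Nat.le_mul_of_pos_left _ Nat.card_pos)⟩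
  obtain ⟨B, rfl⟩ := hroot s (by omega)
  have hdetA : IsUnit (B ^ s).det :=
    Int.isUnit_of_pow_eq_of_natAbs_lt_two_pow hA (Matrix.det_pow B s).symm
      ((Nat.lt_of_le_of_lt (by omega) hs).trans Nat.lt_two_pow_self)
  have hB : IsUnit B := by
    rwa [Matrix.isUnit_iff_isUnit_det, ← isUnit_pow_iff (n := s) (by omega), ← Matrix.det_pow]
  rw [Matrix.map_one _ Int.cast_zero Int.cast_one]
  exact (map_pow _ B s).trans
    ((hB.map (Int.castRingHom (ZMod p)).mapMatrix).pow_eq_one_of_card_units_dvd hNs)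
end

section
/- Let M be a Noetherian module over a commutative ring A and T an A-linear endomorphism of M. If the endomorphism induced by T on M/ker(T^n) is surjective for some n, then for all sufficiently large m, M = ker(T^m) ⊕ im(T^m) and the restriction of T to im(T^m) is an automorphism. -/
/-!
Surjectivity of the induced map says `M = range T + ker T^n`; applying `T` repeatedly and using
that `ker T^n` is `T`-stable gives `M = range T^m + ker T^n ⊆ range T^m + ker T^m` for all `m ≥ n`.
Noetherianity makes `ker T^m ∩ range T^m = 0` for large `m`, so `M = ker T^m ⊕ range T^m`.
On `range T^m` the map `T` is injective because `ker T ⊆ ker T^m`, and surjective because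
`range T^m = T^m (range T^m) = range T^(2m) ⊆ T (range T^m)`.
-/

open Filter Submodule

namespace LinearMap

variable {R M N : Type*} [Ring R] [AddCommGroup M] [Module R M] [AddCommGroup N] [Module R N]

theorem range_sup_eq_top_of_surjective_mapQ {p : Submodule R M} {q : Submodule R N}
    (f : M →ₗ[R] N) {h : p ≤ q.comap f} (hf : Function.Surjective (p.mapQ q f h)) :
    range f ⊔ q = ⊤ := by
  rw [sup_comm, ← map_mkQ_eq_top, ← range_mapQ p q f h, range_eq_top.mpr hf]

variable {T : Module.End R M}

theorem range_pow_sup_eq_top {p : Submodule R M} (hp : p ≤ p.comap T) (hT : range T ⊔ p = ⊤)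
    (k : ℕ) : range (T ^ k) ⊔ p = ⊤ := by
  induction k with
  | zero => simp [Module.End.one_eq_id]
  | succ k ih =>
    have hmap : map T p ≤ p := map_le_iff_le_comap.mpr hp
    calc range (T ^ (k + 1)) ⊔ p = map T (range (T ^ k)) ⊔ map T p ⊔ p := by
          rw [sup_assoc, sup_eq_right.mpr hmap, pow_succ', Module.End.mul_eq_comp, range_comp]
      _ = ⊤ := by rw [← Submodule.map_sup, ih, ← range_eq_map, hT]

theorem codisjoint_ker_pow_range_pow {n m : ℕ} (hT : range T ⊔ ker (T ^ n) = ⊤) (hnm : n ≤ m) :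
    Codisjoint (ker (T ^ m)) (range (T ^ m)) := by
  have hinv : ker (T ^ n) ≤ (ker (T ^ n)).comap T := by
    rw [← ker_comp, ← Module.End.mul_eq_comp, ← pow_succ]
    exact T.iterateKer.monotone n.le_succ
  rw [codisjoint_iff, sup_comm, eq_top_iff, ← range_pow_sup_eq_top hinv hT m]
  exact sup_le_sup_left (T.iterateKer.monotone hnm) _

theorem bijOn_range_pow {m : ℕ} (hm : m ≠ 0) (hT : IsCompl (ker (T ^ m)) (range (T ^ m))) :
    Set.BijOn T (range (T ^ m)) (range (T ^ m)) := by
  refine ⟨?_, ?_, ?_⟩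
  · rintro _ ⟨x, rfl⟩
    exact ⟨T x, by rw [← Module.End.mul_apply, ← Module.End.mul_apply, ← pow_succ, ← pow_succ']⟩
  · have hker : ker T ≤ ker (T ^ m) := by
      simpa using T.iterateKer.monotone (Nat.one_le_iff_ne_zero.mpr hm)
    exact injOn_of_disjoint_ker le_rfl (hT.disjoint.symm.mono_right hker)
  · have hrange : range (T ^ m) ≤ range (T ^ (m + 1)) := calc
      range (T ^ m) = map (T ^ m) (ker (T ^ m) ⊔ range (T ^ m)) := by
          rw [hT.sup_eq_top, ← range_eq_map]
      _ = range (T ^ (m + m)) := by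
          rw [Submodule.map_sup, le_ker_iff_map.mp le_rfl, bot_sup_eq, pow_add,
            Module.End.mul_eq_comp, range_comp]
      _ ≤ range (T ^ (m + 1)) := T.iterateRange.monotone (by omega)
    intro x hx
    simpa [← Submodule.map_coe, ← range_comp, ← Module.End.mul_eq_comp, ← pow_succ'] using hrange hx

end LinearMap

theorem stmt_7 (A : Type*) [CommRing A] (M : Type*) [AddCommGroup M] [Module A M]
    [IsNoetherian A M] (T : M →ₗ[A] M) (n : ℕ)
    (hsurj : Function.Surjective
      ((LinearMap.ker (T ^ n)).mapQ (LinearMap.ker (T ^ n)) T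
        (fun x hx => by
          simp only [Submodule.mem_comap, LinearMap.mem_ker] at hx ⊢
          have : (T ^ n * T) x = 0 := by
            rw [← pow_succ, pow_succ', Module.End.mul_apply, hx, map_zero]
          simpa [Module.End.mul_apply] using this))) :
    ∃ m₀ : ℕ, ∀ m ≥ m₀,
      IsCompl (LinearMap.ker (T ^ m)) (LinearMap.range (T ^ m)) ∧
      Set.BijOn T (LinearMap.range (T ^ m) : Set M) (LinearMap.range (T ^ m) : Set M) := by
  have hsup : LinearMap.range T ⊔ LinearMap.ker (T ^ n) = ⊤ :=
    LinearMap.range_sup_eq_top_of_surjective_mapQ T hsurj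
  refine eventually_atTop.mp ?_
  filter_upwards [Module.End.eventually_disjoint_ker_pow_range_pow T, eventually_ge_atTop n,
    eventually_ne_atTop 0] with m hdisj hnm hm
  have hcompl : IsCompl (LinearMap.ker (T ^ m)) (LinearMap.range (T ^ m)) :=
    ⟨hdisj, LinearMap.codisjoint_ker_pow_range_pow hsup hnm⟩
  exact ⟨hcompl, LinearMap.bijOn_range_pow hm hcompl⟩
end

section
/- Let K be a number field with ring of integers O_K, n a positive integer, and T ∈ M_n(O_K) an invertible matrix (over the fraction field) such that T is an s-th power in M_n(O_K) for all but finitely many positive integers s. Then T is the identity matrix. -/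
/-!
Suppose `T ≠ 1`, say `(T - 1) i j ≠ 0`, and pick a maximal ideal `P` of `𝓞 K` containing neither
`det T` nor `(T - 1) i j`. The residue ring `𝓞 K ⧸ P` is finite, so the unit group of the matrix
ring over it has some finite order `N`. Writing `T = S ^ (N * k)`, the reduction of `T` mod `P` is
invertible, hence so is that of `S`, and therefore `T ≡ 1 (mod P)`, contradicting the choice of `P`.
-/

open NumberField

theorem eq_one_of_isUnit_of_pow_card_units_mul {M : Type*} [Monoid M] [Finite Mˣ] {x y : M}
    (hy : IsUnit y) {k : ℕ} (hk : k ≠ 0) (h : x ^ (Nat.card Mˣ * k) = y) : y = 1 := by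
  have hx : IsUnit x := (isUnit_pow_iff (Nat.mul_ne_zero Nat.card_pos.ne' hk)).mp (h ▸ hy)
  obtain ⟨u, rfl⟩ := hx
  rw [← h, ← Units.val_pow_eq_pow_val, pow_mul, pow_card_eq_one', one_pow, Units.val_one]

theorem Matrix.map_eq_one_of_pow_card_units_mul {n R F : Type*} [Fintype n] [DecidableEq n]
    [CommRing R] [CommRing F] [Finite F] (f : R →+* F) {S T : Matrix n n R}
    (hT : IsUnit (f T.det)) {k : ℕ} (hk : k ≠ 0)
    (h : S ^ (Nat.card (Matrix n n F)ˣ * k) = T) : T.map f = 1 := by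
  refine eq_one_of_isUnit_of_pow_card_units_mul (x := S.map f) ?_ hk ?_
  · rwa [Matrix.isUnit_iff_isUnit_det, ← RingHom.mapMatrix_apply, ← RingHom.map_det]
  · rw [← RingHom.mapMatrix_apply, ← map_pow, h]
    rfl

namespace NumberField.RingOfIntegers

variable {K : Type*} [Field K] [NumberField K]

theorem exists_isMaximal_notMem {y : 𝓞 K} (hy : y ≠ 0) :
    ∃ P : Ideal (𝓞 K), P.IsMaximal ∧ y ∉ P := by
  -- `c = |N(y)|` is a nonzero integer in `(y)`, and no maximal ideal over a prime `p > c` contains it.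
  set c := Ideal.absNorm (Ideal.span {y})
  have hc : c ≠ 0 := by simpa [c, Ideal.absNorm_eq_zero_iff] using hy
  obtain ⟨p, hcp, hp⟩ := Nat.exists_infinite_primes (c + 1)
  have : Fact p.Prime := ⟨hp⟩
  obtain ⟨P, hPmax, hPp⟩ :=
    Ideal.exists_maximal_ideal_liesOver_of_isIntegral (S := 𝓞 K) (Ideal.span {(p : ℤ)})
  refine ⟨P, hPmax, fun hyP => ?_⟩
  have hcP : (c : 𝓞 K) ∈ P := (Ideal.span_singleton_le_iff_mem P).mpr hyP (Ideal.absNorm_mem _)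
  have hpc : p ∣ c := by
    rw [← Int.natCast_dvd_natCast, ← Ideal.mem_span_singleton, Ideal.over_def P (Ideal.span _),
      Ideal.under_def, Ideal.mem_comap]
    simpa using hcP
  exact absurd (Nat.le_of_dvd (Nat.pos_of_ne_zero hc) hpc) (by omega)

end NumberField.RingOfIntegers

theorem Set.Finite.exists_ne_zero_mul_of_setOf_not {p : ℕ → Prop} (h : {s | 0 < s ∧ ¬p s}.Finite)
    {m : ℕ} (hm : 0 < m) : ∃ k ≠ 0, p (m * k) := by
  obtain ⟨B, hB⟩ := h.bddAbove
  refine ⟨B + 1, B.succ_ne_zero, ?_⟩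
  by_contra hp
  have := hB ⟨by positivity, hp⟩
  nlinarith

theorem stmt_11 (K : Type*) [Field K] [NumberField K] (n : ℕ)
    (T : Matrix (Fin n) (Fin n) (𝓞 K)) (hT : T.det ≠ 0)
    (h : {s : ℕ | 0 < s ∧ ¬∃ S : Matrix (Fin n) (Fin n) (𝓞 K), S ^ s = T}.Finite) :
    T = 1 := by
  by_contra hne
  obtain ⟨i, j, hij⟩ : ∃ i j, (T - 1) i j ≠ 0 := by
    by_contra! hall
    exact hne (sub_eq_zero.mp (Matrix.ext hall))
  obtain ⟨P, hPmax, hP⟩ := RingOfIntegers.exists_isMaximal_notMem (mul_ne_zero hT hij)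
  obtain ⟨k, hk, S, hS⟩ := h.exists_ne_zero_mul_of_setOf_not
    (Nat.card_pos (α := (Matrix (Fin n) (Fin n) (𝓞 K ⧸ P))ˣ))
  have hdet : IsUnit (Ideal.Quotient.mk P T.det) :=
    letI := Ideal.Quotient.field P
    isUnit_iff_ne_zero.mpr <|
      Ideal.Quotient.eq_zero_iff_mem.not.mpr fun hd => hP (P.mul_mem_right _ hd)
  have hT1 := Matrix.map_eq_one_of_pow_card_units_mul _ hdet hk hS
  have hijP : (T - 1) i j ∈ P := by
    have hmap : (Ideal.Quotient.mk P).mapMatrix (T - 1) = 0 := by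
      rw [map_sub, map_one, RingHom.mapMatrix_apply, hT1, sub_self]
    rw [← Ideal.Quotient.eq_zero_iff_mem]
    exact congrFun (congrFun hmap i) j
  exact hP (P.mul_mem_left _ hijP)
end

section
/- Let A ∈ M_n(ℤ) be any integer matrix that is an s-th power in M_n(ℤ) for every positive integer s. Then A is idempotent: A^2 = A. -/
lemma pow_period_aux {M : Type*} [Monoid M] {x : M} {i t : ℕ}
    (h : x ^ (i + t) = x ^ i) : ∀ a, i ≤ a → ∀ k, x ^ (a + k * t) = x ^ a := by
  have step : ∀ a, i ≤ a → x ^ (a + t) = x ^ a := by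
    intro a ha
    obtain ⟨d, rfl⟩ := Nat.exists_eq_add_of_le ha
    calc x ^ (i + d + t) = x ^ (i + t) * x ^ d := by rw [← pow_add]; ring_nf
    _ = x ^ i * x ^ d := by rw [h]
    _ = x ^ (i + d) := by rw [← pow_add]
  intro a ha k
  induction k with
  | zero => simp
  | succ k ih =>
    have : a + (k + 1) * t = (a + k * t) + t := by ring
    rw [this, step _ (le_trans ha (Nat.le_add_right _ _)), ih]

lemma finite_monoid_pow (M : Type*) [Monoid M] [Finite M] :
    ∃ s : ℕ, 0 < s ∧ ∀ x : M, x ^ (2 * s) = x ^ s := by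
  have H : ∀ x : M, ∃ i t : ℕ, 0 < t ∧ x ^ (i + t) = x ^ i := by
    intro x
    obtain ⟨a, b, hab, he⟩ := Finite.exists_ne_map_eq_of_infinite (fun k : ℕ => x ^ k)
    rcases lt_or_gt_of_ne hab with hlt | hlt
    · exact ⟨a, b - a, by omega, by rw [Nat.add_sub_cancel' hlt.le]; exact he.symm⟩
    · exact ⟨b, a - b, by omega, by rw [Nat.add_sub_cancel' hlt.le]; exact he⟩
  choose i t ht he using H
  have : Fintype M := Fintype.ofFinite M
  set T : ℕ := ∏ x : M, t x with hT
  set I : ℕ := ∑ x : M, i x with hI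
  have hTpos : 0 < T := Finset.prod_pos (fun x _ => ht x)
  refine ⟨T * (I + 1), by positivity, fun x => ?_⟩
  have hdvd : t x ∣ T * (I + 1) :=
    Dvd.dvd.mul_right (Finset.dvd_prod_of_mem t (Finset.mem_univ x)) _
  obtain ⟨c, hc⟩ := hdvd
  have hle : i x ≤ T * (I + 1) := by
    have h1 : i x ≤ I := Finset.single_le_sum (fun y _ => Nat.zero_le _) (Finset.mem_univ x)
    calc i x ≤ I + 1 := by omega
    _ = 1 * (I + 1) := (one_mul _).symm
    _ ≤ T * (I + 1) := Nat.mul_le_mul_right _ hTpos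
  have : 2 * (T * (I + 1)) = T * (I + 1) + c * (t x) := by rw [hc]; ring
  rw [this, pow_period_aux (he x) _ hle]

theorem stmt_13 (n : ℕ) (A : Matrix (Fin n) (Fin n) ℤ)
    (h : ∀ s : ℕ, 0 < s → ∃ B : Matrix (Fin n) (Fin n) ℤ, B ^ s = A) :
    A ^ 2 = A := by
  have key : ∀ m : ℕ, 0 < m → ∀ i j : Fin n, (m : ℤ) ∣ (A ^ 2 - A) i j := by
    intro m hm i j
    have : NeZero m := ⟨hm.ne'⟩
    obtain ⟨s, hs, hpow⟩ := finite_monoid_pow (Matrix (Fin n) (Fin n) (ZMod m))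
    obtain ⟨B, hB⟩ := h s hs
    set φ : Matrix (Fin n) (Fin n) ℤ →+* Matrix (Fin n) (Fin n) (ZMod m) :=
      (Int.castRingHom (ZMod m)).mapMatrix with hφ
    have h1 : φ B ^ s = φ A := by rw [← map_pow, hB]
    have h2 : φ A ^ 2 = φ A := by
      rw [← h1, ← pow_mul, mul_comm s 2, hpow]
    have h3 : φ (A ^ 2 - A) = 0 := by
      rw [map_sub, map_pow, h2, sub_self]
    have h4 : ((A ^ 2 - A) i j : ZMod m) = 0 := by
      have := congrFun (congrFun h3 i) j
      simpa [hφ, RingHom.mapMatrix_apply, Matrix.map_apply] using this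
    exact (ZMod.intCast_zmod_eq_zero_iff_dvd _ m).mp h4
  have hz : ∀ i j : Fin n, (A ^ 2 - A) i j = 0 := by
    intro i j
    set z : ℤ := (A ^ 2 - A) i j with hzdef
    have hd := key (z.natAbs + 1) (Nat.succ_pos _) i j
    have habs : |z| < ((z.natAbs + 1 : ℕ) : ℤ) := by
      rw [Int.abs_eq_natAbs]; exact_mod_cast Nat.lt_succ_self _
    exact Int.eq_zero_of_abs_lt_dvd hd habs
  ext i j
  have := hz i j
  have h5 : (A ^ 2 - A) i j = (A ^ 2) i j - A i j := by simp [Matrix.sub_apply]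
  omega
end

section
/- Let R be a Dedekind domain, M a finitely generated projective R-module, and T ∈ End_R(M) such that for arbitrarily large positive integers s, T is an s-th power in End_R(M). Then every element of the generalized kernel of T (elements killed by some power of T) lies in ker T; that is, ker(T^n) = ker(T) for all n ≥ 1. -/
/-!
A projective module over a domain is torsion-free, so an element of `M` is killed by an
endomorphism iff its image in the `Frac R`-vector space `V = Frac R ⊗ M`, of dimension
`d = rank M`, is killed by the localized endomorphism. In `V` the kernels of the powers of an
endomorphism stabilise from the exponent `d` on. Writing `T = S ^ s` with `s > d`, both
`ker T = ker (S ^ s)` and `ker (T ^ n) = ker (S ^ (s * n))` therefore equal `ker (S ^ d)`.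
-/

open Module nonZeroDivisors

instance Module.Projective.isTorsionFree {R P : Type*} [Semiring R] [AddCommMonoid P]
    [Module R P] [Module.Projective R P] : IsTorsionFree R P :=
  have ⟨s, hs⟩ := Module.projective_def.mp ‹_›
  hs.injective.moduleIsTorsionFree s (map_smul s)

namespace LocalizedModule

variable {R : Type*} [CommRing R] (S : Submonoid R) {M : Type*} [AddCommGroup M] [Module R M]

theorem map_mul (f g : End R M) : map S (f * g) = map S f * map S g :=
  LinearMap.ext fun x ↦ x.induction_on fun m s ↦ by simp

theorem map_pow (f : End R M) (k : ℕ) : map S (f ^ k) = map S f ^ k := by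
  induction k with
  | zero => exact map_id S
  | succ k ih => rw [pow_succ, map_mul, ih, pow_succ]

theorem map_mk_one_eq_zero_iff (hS : S ≤ R⁰) {N : Type*} [AddCommGroup N] [Module R N]
    [IsTorsionFree R N] (φ : M →ₗ[R] N) (x : M) : map S φ (mk x 1) = 0 ↔ φ x = 0 := by
  rw [map_mk, ← mkLinearMap_apply, IsLocalizedModule.eq_zero_iff S]
  refine ⟨fun ⟨c, hc⟩ ↦ ?_, fun h ↦ ⟨1, by simp [h]⟩⟩
  exact (isRegular_iff_mem_nonZeroDivisors.mpr (hS c.2)).smul_eq_zero_iff_right.mp hc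

end LocalizedModule

theorem Module.End.ker_pow_eq_ker_pow_finrank_localizedModule_of_le {R M : Type*} [CommRing R]
    [IsDomain R] [AddCommGroup M] [Module R M] [Module.Finite R M] [IsTorsionFree R M]
    (f : End R M) {k : ℕ} (hk : finrank (FractionRing R) (LocalizedModule R⁰ M) ≤ k) :
    LinearMap.ker (f ^ k) =
      LinearMap.ker (f ^ finrank (FractionRing R) (LocalizedModule R⁰ M)) := by
  have : Module.Finite (FractionRing R) (LocalizedModule R⁰ M) :=
    .of_isLocalizedModule R⁰ (LocalizedModule.mkLinearMap R⁰ M)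
  have localized_ker_stable := Module.End.ker_pow_eq_ker_pow_finrank_of_le
    (f := (LocalizedModule.map R⁰ f : End (FractionRing R) _)) hk
  have mem_ker_iff (j : ℕ) (x : M) :
      x ∈ LinearMap.ker (f ^ j) ↔ .mk x 1 ∈ LinearMap.ker (LocalizedModule.map R⁰ f ^ j) := by
    rw [LinearMap.mem_ker, LinearMap.mem_ker, ← LocalizedModule.map_pow,
      LocalizedModule.map_mk_one_eq_zero_iff R⁰ le_rfl]
  ext x
  rw [mem_ker_iff, mem_ker_iff, localized_ker_stable]

theorem stmt_16_general (R : Type*) [CommRing R] [IsDomain R]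
    (M : Type*) [AddCommGroup M] [Module R M] [Module.Finite R M] [Module.Projective R M]
    (T : M →ₗ[R] M)
    (h : {s : ℕ | 0 < s ∧ ∃ S : M →ₗ[R] M, S ^ s = T}.Infinite) :
    ∀ n : ℕ, 1 ≤ n → LinearMap.ker (T ^ n) = LinearMap.ker T := by
  intro n hn
  obtain ⟨s, ⟨-, S, rfl⟩, hs⟩ := h.exists_gt (finrank (FractionRing R) (LocalizedModule R⁰ M))
  rw [← pow_mul, End.ker_pow_eq_ker_pow_finrank_localizedModule_of_le S hs.le,
    End.ker_pow_eq_ker_pow_finrank_localizedModule_of_le S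
      (hs.le.trans (Nat.le_mul_of_pos_right s hn))]

theorem stmt_16 (R : Type*) [CommRing R] [IsDomain R] [IsDedekindDomain R]
    (M : Type*) [AddCommGroup M] [Module R M] [Module.Finite R M] [Module.Projective R M]
    (T : M →ₗ[R] M)
    (h : {s : ℕ | 0 < s ∧ ∃ S : M →ₗ[R] M, S ^ s = T}.Infinite) :
    ∀ n : ℕ, 1 ≤ n → LinearMap.ker (T ^ n) = LinearMap.ker T :=
  stmt_16_general R M T h
end

section
/- Let R be a Dedekind domain, M a finitely generated projective R-module, and T ∈ End_R(M) an endomorphism that is an s-th power in End_R(M) for arbitrarily large positive integers s. Then M = ker T ⊕ im T and the restriction of T to im T is an automorphism. -/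
/-!
Write `T = S ^ s` with `s ≥ rank M`. Since `M` is flat it embeds into `K ⊗ M`, `K = Frac R`,
where the kernels of the powers of `S` stabilise once the exponent reaches the rank; hence
`ker T² = ker T`, so `ker T ⊓ range T = ⊥`, and rank–nullity makes `M ⧸ (ker T ⊔ range T)`
torsion, hence of finite length `ℓ` because `R` is Dedekind. Choosing moreover `s > ℓ`, the chain
`ker T ⊔ range Sᵏ`, which descends from `M` (`k = 0`) to `ker T ⊔ range T` (`k = s`), stalls at
some `k < s`. Stability of the kernels of the powers of `S` turns the stall into
`ker T ⊔ range S = M`, and applying `S` repeatedly gives `ker T ⊔ range Sʲ = M` for every `j`.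
-/

open Module LinearMap
open scoped TensorProduct

theorem Antitone.exists_le_apply_succ_eq_of_coheight_le {α : Type*} [PartialOrder α]
    {C : ℕ → α} (hC : Antitone C) {P : α} {n : ℕ} (hP : P ≤ C (n + 1))
    (hn : Order.coheight P ≤ n) : ∃ k ≤ n, C (k + 1) = C k := by
  by_contra! hne
  have hlt (i : Fin (n + 1)) : C (n + 1 - i.castSucc) < C (n + 1 - i.succ) := by
    have hi : n + 1 - (i : ℕ) = n - i + 1 := by omega
    simp only [Fin.val_succ, Fin.val_castSucc, hi, Nat.add_sub_add_right]
    exact lt_of_le_of_ne (hC (Nat.le_succ _)) (hne _ (Nat.sub_le _ _))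
  let p : LTSeries α :=
    LTSeries.mk (n + 1) (fun i => C (n + 1 - i)) (Fin.strictMono_iff_lt_succ.mpr hlt)
  have : ((n + 1 : ℕ) : ℕ∞) ≤ n := (Order.length_le_coheight (p := p) hP).trans hn
  exact Nat.not_succ_le_self n (by exact_mod_cast this)

theorem Module.IsTorsion.isFiniteLength {R M : Type*} [CommRing R] [IsNoetherianRing R]
    [Ring.KrullDimLE 1 R] [AddCommGroup M] [Module R M] [Module.Finite R M]
    (hM : Module.IsTorsion R M) : IsFiniteLength R M := by
  obtain ⟨r, hr, hr0⟩ := Submodule.annihilator_top_inter_nonZeroDivisors hM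
  have hrM : Module.IsTorsionBySet R M (Ideal.span {r}) :=
    (Module.isTorsionBySet_span_singleton_iff r).mpr
      fun x => Submodule.mem_annihilator.mp hr x trivial
  -- `M` is a finite module over the Artinian ring `R ⧸ (r)`.
  let := hrM.module
  have := hrM.isScalarTower (S := R)
  have : IsArtinianRing (R ⧸ Ideal.span {r}) := isArtinian_of_tower R
    (isFiniteLength_iff_isNoetherian_isArtinian.mp (isFiniteLength_quotient_span_singleton R hr0)).2
  have : Module.Finite (R ⧸ Ideal.span {r}) M := Module.Finite.of_restrictScalars_finite R _ _
  rw [isFiniteLength_iff_isNoetherian_isArtinian]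
  exact ⟨inferInstance,
    isArtinian_of_surjective_algebraMap (Ideal.Quotient.mk_surjective (I := Ideal.span {r}))⟩

namespace Module.End

section Ring

variable {R M : Type*} [Ring R] [AddCommGroup M] [Module R M]

theorem sup_range_eq_top_of_sup_range_pow_le {K : Submodule R M} {f : End R M} {k : ℕ}
    (hK : K.comap (f ^ k) ≤ K) (h : K ⊔ range (f ^ k) ≤ K ⊔ range (f ^ (k + 1))) :
    K ⊔ range f = ⊤ := by
  refine eq_top_iff.mpr fun x _ => ?_
  obtain ⟨κ, hκ, _, ⟨z, rfl⟩, hsum⟩ :=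
    Submodule.mem_sup.mp (h (Submodule.mem_sup_right (mem_range_self (f ^ k) x)))
  have hxz : x - f z ∈ K := hK <| by
    rw [Submodule.mem_comap, map_sub, ← mul_apply, ← pow_succ, ← hsum, add_sub_cancel_right]
    exact hκ
  simpa using Submodule.add_mem_sup hxz (mem_range_self f z)

theorem sup_range_pow_eq_top {K : Submodule R M} {f : End R M} (hK : K.map f ≤ K)
    (h : K ⊔ range f = ⊤) (j : ℕ) : K ⊔ range (f ^ j) = ⊤ := by
  induction j with
  | zero => simp [one_eq_id]
  | succ j ih =>
    refine eq_top_iff.mpr (h.symm.le.trans (sup_le le_sup_left ?_))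
    calc range f = (K ⊔ range (f ^ j)).map f := by rw [ih, Submodule.map_top]
      _ ≤ K ⊔ range (f ^ (j + 1)) := by
        rw [Submodule.map_sup, ← range_comp, ← mul_eq_comp, ← pow_succ']
        exact sup_le_sup_right hK _

theorem bijOn_range_of_isCompl {f : End R M} (h : IsCompl (ker f) (range f)) :
    Set.BijOn f (range f) (range f) := by
  refine ⟨fun x _ => mem_range_self f x, fun x hx y hy hxy => ?_, ?_⟩
  · have : x - y ∈ ker f ⊓ range f := ⟨by simp [hxy], sub_mem hx hy⟩
    rwa [h.inf_eq_bot, Submodule.mem_bot, sub_eq_zero] at this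
  · rintro _ ⟨x, rfl⟩
    obtain ⟨κ, hκ, _, ⟨z, rfl⟩, rfl⟩ :=
      Submodule.mem_sup.mp (h.sup_eq_top ▸ Submodule.mem_top : x ∈ ker f ⊔ range f)
    exact ⟨f z, mem_range_self f z, by simp [mem_ker.mp hκ]⟩

end Ring

variable {R M : Type*} [CommRing R] [IsDomain R] [AddCommGroup M] [Module R M] [Module.Finite R M]

theorem ker_pow_le_ker_pow_of_finrank_le [Module.Flat R M] (S : End R M) {a : ℕ}
    (ha : finrank R M ≤ a) (b : ℕ) : ker (S ^ b) ≤ ker (S ^ a) := by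
  let K := FractionRing R
  let ι := TensorProduct.mk R K M 1
  have hcomm (n : ℕ) (x : M) : ι ((S ^ n) x) = (S.baseChange K ^ n) (ι x) := by
    simp [ι, ← baseChange_pow]
  have hd : finrank K (K ⊗[R] M) ≤ a := (TensorProduct.isBaseChange R M K).finrank_eq ▸ ha
  intro x hx
  rw [mem_ker] at hx ⊢
  apply Module.Flat.tensorProduct_mk_injective (R := R) (S := K) (M := M)
  rw [hcomm, map_zero, ← mem_ker, ker_pow_eq_ker_pow_finrank_of_le hd]
  exact ker_pow_le_ker_pow_finrank _ b (by rw [mem_ker, ← hcomm, hx, map_zero])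

theorem disjoint_ker_pow_range_pow_of_finrank_le [Module.Flat R M] (S : End R M) {s : ℕ}
    (hs : finrank R M ≤ s) : Disjoint (ker (S ^ s)) (range (S ^ s)) := by
  rw [disjoint_iff_inf_le]
  rintro _ ⟨hx, y, rfl⟩
  refine S.ker_pow_le_ker_pow_of_finrank_le hs (s + s) ?_
  rwa [mem_ker, pow_add, mul_apply]

theorem isTorsion_quotient_ker_sup_range [IsNoetherianRing R] (f : End R M)
    (h : Disjoint (ker f) (range f)) : Module.IsTorsion R (M ⧸ (ker f ⊔ range f)) := by
  rw [← Module.finrank_eq_zero_iff_isTorsion]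
  have hsum := (ker f ⊔ range f).finrank_quotient_add_finrank
  have hnull := (ker f).finrank_quotient_add_finrank
  rw [f.quotKerEquivRange.finrank_eq] at hnull
  have hsup : finrank R ↥(ker f ⊔ range f) = finrank R (ker f) + finrank R (range f) := by
    have := Submodule.rank_sup_add_rank_inf_eq (ker f) (range f)
    rw [h.eq_bot, rank_bot, add_zero] at this
    rw [← Nat.cast_inj (R := Cardinal), Nat.cast_add, finrank_eq_rank, finrank_eq_rank,
      finrank_eq_rank, this]
  omega

end Module.End

open Module.End

theorem stmt_17_general (R : Type*) [CommRing R] [IsDedekindDomain R]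
    (M : Type*) [AddCommGroup M] [Module R M] [Module.Finite R M] [Module.Projective R M]
    (T : M →ₗ[R] M)
    (h : {s : ℕ | 0 < s ∧ ∃ S : M →ₗ[R] M, S ^ s = T}.Infinite) :
    IsCompl (LinearMap.ker T) (LinearMap.range T) ∧
      Set.BijOn T (LinearMap.range T : Set M) (LinearMap.range T : Set M) := by
  obtain ⟨s₀, ⟨-, S₀, rfl⟩, hs₀⟩ := h.exists_gt (finrank R M)
  have hdisj := disjoint_ker_pow_range_pow_of_finrank_le S₀ hs₀.le
  obtain ⟨ℓ, hℓ⟩ := ENat.ne_top_iff_exists.mp <| Module.length_ne_top_iff.mpr <|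
    (isTorsion_quotient_ker_sup_range _ hdisj).isFiniteLength
  rw [Module.length_quotient] at hℓ
  obtain ⟨s, ⟨-, S, hS⟩, hs⟩ := h.exists_gt (max (finrank R M) ℓ)
  rw [max_lt_iff] at hs
  rw [← hS] at hdisj hℓ ⊢
  have hC : Antitone fun k => ker (S ^ s) ⊔ range (S ^ k) := fun i j hij =>
    sup_le_sup_left (by exact S.iterateRange.monotone hij) _
  obtain ⟨k, -, hstall⟩ := hC.exists_le_apply_succ_eq_of_coheight_le
    (sup_le_sup_left (by exact S.iterateRange.monotone hs.2) _) hℓ.ge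
  have hker : ker (S ^ (s + k)) ≤ ker (S ^ s) := ker_pow_le_ker_pow_of_finrank_le S hs.1.le _
  have hcod : ker (S ^ s) ⊔ range S = ⊤ := sup_range_eq_top_of_sup_range_pow_le
    (by rwa [← ker_comp, ← mul_eq_comp, ← pow_add]) hstall.ge
  have hinv : (ker (S ^ s)).map S ≤ ker (S ^ s) := by
    rw [Submodule.map_le_iff_le_comap, ← ker_comp, ← mul_eq_comp, ← pow_succ, pow_succ',
      mul_eq_comp]
    exact ker_le_ker_comp _ _
  have hcompl : IsCompl (ker (S ^ s)) (range (S ^ s)) :=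
    ⟨hdisj, codisjoint_iff.mpr (sup_range_pow_eq_top hinv hcod s)⟩
  exact ⟨hcompl, bijOn_range_of_isCompl hcompl⟩

theorem stmt_17 (R : Type*) [CommRing R] [IsDomain R] [IsDedekindDomain R]
    (M : Type*) [AddCommGroup M] [Module R M] [Module.Finite R M] [Module.Projective R M]
    (T : M →ₗ[R] M)
    (h : {s : ℕ | 0 < s ∧ ∃ S : M →ₗ[R] M, S ^ s = T}.Infinite) :
    IsCompl (LinearMap.ker T) (LinearMap.range T) ∧
      Set.BijOn T (LinearMap.range T : Set M) (LinearMap.range T : Set M) :=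
  stmt_17_general R M T h
end

section
/- Let k be a finite field and x ∈ k[[t]] a formal power series that is a unit and is an s-th power in k[[t]]^× for infinitely many s divisible by arbitrarily high powers of p = char(k). Then x is a root of unity, of order dividing |k| - 1. -/
/-!
Write `p` for the characteristic and `q` for the cardinality of `k`. For any unit `y`, the
series `y ^ (q - 1)` has constant coefficient `1`, and in characteristic `p` the Frobenius
`f ↦ f ^ p ^ n` carries series with constant coefficient `1` into `1 + X ^ p ^ n k⟦X⟧`. If
`x = y ^ (p ^ n * r)`, then `x ^ (q - 1) = ((y ^ (q - 1)) ^ r) ^ p ^ n ≡ 1 mod X ^ p ^ n`, and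
since `n` is arbitrary, `x ^ (q - 1) = 1`.
-/

namespace PowerSeries

theorem eq_zero_of_forall_X_pow_dvd {R : Type*} [Semiring R] {f : R⟦X⟧}
    (h : ∀ n, X ^ n ∣ f) : f = 0 := by
  ext n
  exact X_pow_dvd_iff.mp (h (n + 1)) n n.lt_succ_self

theorem X_pow_expChar_pow_dvd_pow_sub_pow {R : Type*} [CommRing R] (p : ℕ) [ExpChar R p]
    {f g : R⟦X⟧} (hfg : constantCoeff f = constantCoeff g) (n : ℕ) :
    X ^ p ^ n ∣ f ^ p ^ n - g ^ p ^ n := by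
  have : ExpChar R⟦X⟧ p := expChar_of_injective_ringHom C_injective p
  rw [← sub_pow_expChar_pow]
  exact pow_dvd_pow_of_dvd (X_dvd_iff.mpr (by rw [map_sub, hfg, sub_self])) _

theorem constantCoeff_pow_card_sub_one {k : Type*} [Field k] [Fintype k] (u : k⟦X⟧ˣ) :
    constantCoeff ((u : k⟦X⟧) ^ (Fintype.card k - 1)) = 1 := by
  rw [map_pow]
  exact FiniteField.pow_card_sub_one_eq_one _ (u.isUnit.map constantCoeff).ne_zero

end PowerSeries

open PowerSeries in
theorem stmt_18_general (k : Type*) [Field k] [Fintype k] (x : (PowerSeries k)ˣ)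
    (S : Set ℕ)
    (hpow : ∀ s ∈ S, 0 < s ∧ ∃ y : (PowerSeries k)ˣ, y ^ s = x)
    (hdivp : ∀ m : ℕ, ∃ s ∈ S, (ringChar k) ^ m ∣ s) :
    x ^ (Fintype.card k - 1) = 1 := by
  set p := ringChar k
  have hp : p.Prime := CharP.char_is_prime k p
  have : Fact p.Prime := ⟨hp⟩
  rw [← Units.val_inj, Units.val_one, ← sub_eq_zero]
  refine eq_zero_of_forall_X_pow_dvd fun n ↦ ?_
  obtain ⟨s, hsS, r, rfl⟩ := hdivp n
  obtain ⟨-, y, rfl⟩ := hpow _ hsS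
  have hy : constantCoeff (((y : k⟦X⟧) ^ (Fintype.card k - 1)) ^ r) = 1 := by
    rw [map_pow, constantCoeff_pow_card_sub_one, one_pow]
  have hxy : ((y ^ (p ^ n * r)) ^ (Fintype.card k - 1) : (PowerSeries k)ˣ) =
      (((y : k⟦X⟧) ^ (Fintype.card k - 1)) ^ r) ^ p ^ n := by
    push_cast
    ring
  have hdvd := X_pow_expChar_pow_dvd_pow_sub_pow p (g := 1) (hy.trans (map_one _).symm) n
  rw [one_pow] at hdvd
  rw [hxy]
  exact (pow_dvd_pow X (Nat.lt_pow_self hp.one_lt).le).trans hdvd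

theorem stmt_18 (k : Type*) [Field k] [Fintype k] (x : (PowerSeries k)ˣ)
    (S : Set ℕ) (hS : S.Infinite)
    (hpow : ∀ s ∈ S, 0 < s ∧ ∃ y : (PowerSeries k)ˣ, y ^ s = x)
    (hdivp : ∀ m : ℕ, ∃ s ∈ S, (ringChar k) ^ m ∣ s) :
    x ^ (Fintype.card k - 1) = 1 :=
  stmt_18_general k x S hpow hdivp
end
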